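/- Let G and H be finite connected graphs. If u, u′ ∈ V(G) are such that u′ does not belong to the closed neighbourhood of u (i.e. u′ ≠ u and u′ is not adjacent to u), and v, v′ ∈ V(H) are such that v′ does not belong to the closed neighbourhood of v, then the set {(u,v),(u′,v′)} is a maximal monophonic position set of the Cartesian product G □ H (it is a monophonic position set and no proper superset of it is a monophonic position set). -/

import Mathlib

open SimpleGraph

/-- A walk is *monophonic* if it is an induced path: it is a path and the only
edges of the graph between vertices of the walk are the edges of the walk. -/
def SimpleGraph.Walk.IsMonophonic {V : Type*} {G : SimpleGraph V} {u v : V}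
    (p : G.Walk u v) : Prop :=
  p.IsPath ∧ ∀ a b : V, a ∈ p.support → b ∈ p.support → G.Adj a b → p.toSubgraph.Adj a b

/-- A set `S` is a *monophonic position set* if no monophonic path contains
more than two vertices of `S`. -/
def SimpleGraph.IsMPSet {V : Type*} (G : SimpleGraph V) (S : Set V) : Prop :=
  ∀ ⦃u v : V⦄ (p : G.Walk u v), p.IsMonophonic → ({x ∈ S | x ∈ p.support}).ncard ≤ 2

/-- The *monophonic position number*: the largest cardinality of a monophonic
position set. -/
noncomputable def SimpleGraph.mpNum {V : Type*} (G : SimpleGraph V) : ℕ :=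
  sSup {n | ∃ S : Set V, G.IsMPSet S ∧ S.ncard = n}

/-!
A two-element set is trivially a monophonic position set, so maximality amounts to putting every
third vertex `(x, y)` on an induced path through `(u, v)` and `(u', v')`. Such paths are built as
staircases: induced paths of `H` laid in columns `{a} × H` alternating with induced paths of `G`
laid in rows `G × {b}`. Two consecutive segments meet at a corner and never span a chord, and
as `u, u'` and `v, v'` are distinct and non-adjacent, neither do columns at `u` and `u'` or rows
at `v` and `v'`.
If `x` lies on an induced `u`–`u'` path `P`, the staircase runs up column `u` to row `y`, along
`P`, and up column `u'` to `v'`; symmetrically for `y`. Otherwise `x` avoids an induced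
`u`–`u'` path `P` and `y` an induced `v`–`v'` path `Q`, and a four-segment staircase through
`P` and `Q` works: it starts with the edge `x u` when `x ~ u` (or `x ~ u'`), and otherwise with
an induced path from `y` to whichever of `v, v'` it reaches without passing the other.
-/

namespace SimpleGraph

variable {V V' : Type*} {G : SimpleGraph V} {G' : SimpleGraph V'}

namespace Walk

variable {u v w : V}

theorem isMonophonic_iff (p : G.Walk u v) : p.IsMonophonic ↔ p.IsPath ∧ p.IsChordless := by
  simp only [IsMonophonic, isChordless_iff_forall_mem_edges, adj_toSubgraph_iff_mem_edges]

theorem IsMonophonic.isPath {p : G.Walk u v} (hp : p.IsMonophonic) : p.IsPath := hp.1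

theorem IsMonophonic.isChordless {p : G.Walk u v} (hp : p.IsMonophonic) : p.IsChordless :=
  ((isMonophonic_iff p).mp hp).2

theorem IsMonophonic.reverse {p : G.Walk u v} (hp : p.IsMonophonic) : p.reverse.IsMonophonic := by
  refine (isMonophonic_iff _).mpr ⟨hp.isPath.reverse, ?_⟩
  rw [isChordless_iff_forall_mem_edges]
  intro a b ha hb hab
  rw [support_reverse, List.mem_reverse] at ha hb
  rw [edges_reverse, List.mem_reverse]
  exact hp.isChordless.mem_edges ha hb hab

theorem IsMonophonic.map {p : G.Walk u v} (hp : p.IsMonophonic) (f : G ↪g G') :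
    (p.map f.toHom).IsMonophonic := by
  refine (isMonophonic_iff _).mpr ⟨hp.isPath.map f.injective, ?_⟩
  rw [isChordless_iff_forall_mem_edges]
  intro a b ha hb hab
  rw [support_map, List.mem_map] at ha hb
  obtain ⟨a, ha, rfl⟩ := ha
  obtain ⟨b, hb, rfl⟩ := hb
  rw [edges_map, List.mem_map]
  exact ⟨s(a, b), hp.isChordless.mem_edges ha hb (f.map_adj_iff.mp hab), rfl⟩

theorem _root_.SimpleGraph.Adj.isMonophonic_toWalk (h : G.Adj u v) : h.toWalk.IsMonophonic :=
  (isMonophonic_iff _).mpr ⟨h.isPath_toWalk, h.isChordless_toWalk⟩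

theorem IsMonophonic.append {p : G.Walk u v} {q : G.Walk v w} (hp : p.IsMonophonic)
    (hq : q.IsMonophonic)
    (hsep : ∀ a ∈ p.support, ∀ b ∈ q.support, a ≠ v → b ≠ v → a ≠ b ∧ ¬G.Adj a b) :
    (p.append q).IsMonophonic := by
  have hv_tail : v ∉ q.support.tail := by
    have := hq.isPath.support_nodup
    rw [← cons_tail_support] at this
    exact (List.nodup_cons.mp this).1
  refine (isMonophonic_iff _).mpr ⟨IsPath.mk' ?_, ?_⟩
  · rw [support_append, List.nodup_append]
    refine ⟨hp.isPath.support_nodup, hq.isPath.support_nodup.sublist (List.tail_sublist _),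
      fun a ha b hb hab => ?_⟩
    subst hab
    have hav : a ≠ v := fun h => hv_tail (h ▸ hb)
    exact (hsep a ha a (List.mem_of_mem_tail hb) hav hav).1 rfl
  · rw [isChordless_iff_forall_mem_edges]
    intro a b ha hb hab
    have cross : ∀ a ∈ p.support, ∀ b ∈ q.support, G.Adj a b →
        s(a, b) ∈ p.edges ∨ s(a, b) ∈ q.edges := by
      intro a ha b hb hab
      by_cases hav : a = v
      · exact .inr (hq.isChordless.mem_edges (hav ▸ q.start_mem_support) hb hab)
      by_cases hbv : b = v
      · exact .inl (hp.isChordless.mem_edges ha (hbv ▸ p.end_mem_support) hab)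
      exact absurd hab (hsep a ha b hb hav hbv).2
    rw [edges_append, List.mem_append]
    rw [mem_support_append_iff] at ha hb
    rcases ha with ha | ha <;> rcases hb with hb | hb
    · exact .inl (hp.isChordless.mem_edges ha hb hab)
    · exact cross a ha b hb hab
    · rw [Sym2.eq_swap]
      exact cross b hb a ha hab.symm
    · exact .inr (hq.isChordless.mem_edges ha hb hab)

theorem IsMonophonic.takeUntil [DecidableEq V] {p : G.Walk u v} (hp : p.IsMonophonic)
    (hw : w ∈ p.support) : (p.takeUntil w hw).IsMonophonic := by
  have hsplit : ((p.takeUntil w hw).append (p.dropUntil w hw)).IsPath := by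
    rw [take_spec]
    exact hp.isPath
  have junction : ∀ a ∈ (p.takeUntil w hw).support, a ∈ (p.dropUntil w hw).support → a = w :=
    fun a ha ha' => by_contra fun h => hsplit.ne_of_mem_support_of_append h ha ha' rfl
  refine (isMonophonic_iff _).mpr ⟨hp.isPath.takeUntil hw, ?_⟩
  rw [isChordless_iff_forall_mem_edges]
  intro a b ha hb hab
  have hedge := hp.isChordless.mem_edges (p.support_takeUntil_subset_support hw ha)
    (p.support_takeUntil_subset_support hw hb) hab
  rw [← take_spec p hw, edges_append, List.mem_append] at hedge
  refine hedge.resolve_right fun hdrop => hab.ne ?_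
  rw [junction a ha (fst_mem_support_of_mem_edges _ hdrop),
    junction b hb (snd_mem_support_of_mem_edges _ hdrop)]

theorem getVert_dist_eq_of_length_eq_dist {p : G.Walk u v} (hp : p.length = G.dist u v)
    {a : V} (ha : a ∈ p.support) : p.getVert (G.dist u a) = a := by
  classical
  rw [← length_eq_dist_of_subwalk hp (p.isSubwalk_takeUntil ha)]
  exact p.getVert_length_takeUntil ha

theorem isChordless_of_length_eq_dist {p : G.Walk u v} (hp : p.length = G.dist u v) :
    p.IsChordless := by
  classical
  rw [isChordless_iff_forall_mem_edges]
  intro a b ha hb hab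
  wlog hle : G.dist u a ≤ G.dist u b generalizing a b
  · rw [Sym2.eq_swap]
    exact this hb ha hab.symm (by omega)
  have hne : G.dist u a ≠ G.dist u b := fun h => hab.ne <| by
    rw [← getVert_dist_eq_of_length_eq_dist hp ha, h, getVert_dist_eq_of_length_eq_dist hp hb]
  have hsucc : G.dist u b = G.dist u a + 1 := by
    rcases hab.diff_dist_adj (u := u) with h | h | h <;> omega
  have hb_le : G.dist u b ≤ p.length :=
    (dist_le (p.takeUntil b hb)).trans (p.length_takeUntil_le_length hb)
  rw [mk_mem_edges_iff_exists]
  refine ⟨G.dist u a, by omega, ?_⟩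
  rw [← hsucc, getVert_dist_eq_of_length_eq_dist hp ha, getVert_dist_eq_of_length_eq_dist hp hb]

end Walk

open Walk

theorem Connected.exists_isMonophonic (hG : G.Connected) (u v : V) :
    ∃ p : G.Walk u v, p.IsMonophonic :=
  let ⟨p, hp, hlen⟩ := hG.exists_path_of_dist u v
  ⟨p, (isMonophonic_iff p).mpr ⟨hp, isChordless_of_length_eq_dist hlen⟩⟩

theorem Connected.exists_isMonophonic_avoiding (hG : G.Connected) (x : V) {v v' : V}
    (hne : v ≠ v') :
    (∃ p : G.Walk x v, p.IsMonophonic ∧ v' ∉ p.support) ∨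
      ∃ p : G.Walk x v', p.IsMonophonic ∧ v ∉ p.support := by
  classical
  obtain ⟨p, hp⟩ := hG.exists_isMonophonic x v
  by_cases h : v' ∈ p.support
  · exact .inr ⟨p.takeUntil v' h, hp.takeUntil h, endpoint_notMem_support_takeUntil hp.isPath h hne⟩
  · exact .inl ⟨p, hp, h⟩

def LieOnMonophonicPath (G : SimpleGraph V) (a b c : V) : Prop :=
  ∃ (s t : V) (p : G.Walk s t), p.IsMonophonic ∧ a ∈ p.support ∧ b ∈ p.support ∧ c ∈ p.support

theorem LieOnMonophonicPath.comm {a b c : V} (h : G.LieOnMonophonicPath a b c) :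
    G.LieOnMonophonicPath b a c :=
  let ⟨s, t, p, hp, ha, hb, hc⟩ := h
  ⟨s, t, p, hp, hb, ha, hc⟩

theorem LieOnMonophonicPath.map {a b c : V} (h : G.LieOnMonophonicPath a b c) (f : G ↪g G') :
    G'.LieOnMonophonicPath (f a) (f b) (f c) := by
  obtain ⟨s, t, p, hp, ha, hb, hc⟩ := h
  refine ⟨f s, f t, p.map f.toHom, hp.map f, ?_, ?_, ?_⟩ <;>
    rw [Walk.support_map] <;> exact List.mem_map_of_mem ‹_›

theorem isMPSet_pair (G : SimpleGraph V) (a b : V) : G.IsMPSet {a, b} := fun _ _ _ _ =>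
  calc _ ≤ ({a, b} : Set V).ncard := Set.ncard_le_ncard (Set.sep_subset _ _) (Set.toFinite _)
    _ ≤ ({b} : Set V).ncard + 1 := Set.ncard_insert_le a {b}
    _ = 2 := by rw [Set.ncard_singleton]

theorem IsMPSet.eq_pair {T : Set V} {a b : V} (hT : G.IsMPSet T) (hab : a ≠ b)
    (hsub : {a, b} ⊆ T) (hlie : ∀ c, c ≠ a → c ≠ b → G.LieOnMonophonicPath a b c) :
    T = {a, b} := by
  refine Set.Subset.antisymm (fun c hcT => ?_) hsub
  by_contra hc
  simp only [Set.mem_insert_iff, Set.mem_singleton_iff, not_or] at hc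
  obtain ⟨s, t, p, hp, ha, hb, hcp⟩ := hlie c hc.1 hc.2
  have hthree : ({a, b, c} : Set V).ncard = 3 :=
    Set.ncard_eq_three.mpr ⟨a, b, c, hab, Ne.symm hc.1, Ne.symm hc.2, rfl⟩
  have hle : ({a, b, c} : Set V).ncard ≤ {x ∈ T | x ∈ p.support}.ncard := by
    refine Set.ncard_le_ncard ?_ ((List.finite_toSet p.support).subset fun x hx => hx.2)
    rintro x (rfl | rfl | rfl)
    exacts [⟨hsub (by simp), ha⟩, ⟨hsub (by simp), hb⟩, ⟨hcT, hcp⟩]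
  have := hT p hp
  omega

section BoxProd

variable {α β : Type*} {G : SimpleGraph α} {H : SimpleGraph β}

theorem Walk.mem_support_boxProdLeft {a₁ a₂ : α} (b : β) (W : G.Walk a₁ a₂) {z : α × β} :
    z ∈ (W.boxProdLeft H b).support ↔ ∃ a ∈ W.support, (a, b) = z := by
  change z ∈ (W.map (G.boxProdLeft H b).toHom).support ↔ _
  rw [support_map, List.mem_map]
  rfl

theorem Walk.mem_support_boxProdRight (a : α) {b₁ b₂ : β} (W : H.Walk b₁ b₂) {z : α × β} :
    z ∈ (W.boxProdRight G a).support ↔ ∃ b ∈ W.support, (a, b) = z := by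
  change z ∈ (W.map (G.boxProdRight H a).toHom).support ↔ _
  rw [support_map, List.mem_map]
  rfl

theorem Walk.IsMonophonic.boxProdLeft {a₁ a₂ : α} {W : G.Walk a₁ a₂} (hW : W.IsMonophonic)
    (b : β) : (W.boxProdLeft H b).IsMonophonic :=
  hW.map (G.boxProdLeft H b)

theorem Walk.IsMonophonic.boxProdRight {b₁ b₂ : β} {W : H.Walk b₁ b₂} (hW : W.IsMonophonic)
    (a : α) : (W.boxProdRight G a).IsMonophonic :=
  hW.map (G.boxProdRight H a)

theorem boxProd_ne_and_not_adj {a a' : α} {b b' : β} (ha : a ≠ a') (hb : b ≠ b') :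
    (a, b) ≠ (a', b') ∧ ¬(G □ H).Adj (a, b) (a', b') := by
  simp [boxProd_adj, ha, hb]

theorem isMonophonic_staircase₃ {c₁ c₂ : α} {s r t : β} {W₁ : H.Walk s r} {W₂ : G.Walk c₁ c₂}
    {W₃ : H.Walk r t} (h₁ : W₁.IsMonophonic) (h₂ : W₂.IsMonophonic) (h₃ : W₃.IsMonophonic)
    (hc : c₁ ≠ c₂) (h₁₃ : G.Adj c₁ c₂ → ∀ q ∈ W₁.support, q ∈ W₃.support → q = r) :
    ((W₁.boxProdRight G c₁).append
      ((W₂.boxProdLeft H r).append (W₃.boxProdRight G c₂))).IsMonophonic := by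
  refine (h₁.boxProdRight c₁).append ((h₂.boxProdLeft r).append (h₃.boxProdRight c₂) ?_) ?_
  · simp only [mem_support_boxProdLeft, mem_support_boxProdRight]
    rintro _ ⟨p, -, rfl⟩ _ ⟨q, -, rfl⟩ hp hq
    exact boxProd_ne_and_not_adj (by grind) (by grind)
  · simp only [mem_support_append_iff, mem_support_boxProdLeft, mem_support_boxProdRight]
    rintro _ ⟨q, hq, rfl⟩ _ (⟨p, -, rfl⟩ | ⟨q', hq', rfl⟩) hqr hz
    · exact boxProd_ne_and_not_adj (by grind) (by grind)
    · simp only [ne_eq, Prod.mk.injEq, boxProd_adj, hc, false_and]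
      grind

theorem isMonophonic_staircase₄ {c₁ c₂ c₃ : α} {s r₁ r₂ : β} {W₁ : H.Walk s r₁}
    {W₂ : G.Walk c₁ c₂} {W₃ : H.Walk r₁ r₂} {W₄ : G.Walk c₂ c₃} (h₁ : W₁.IsMonophonic)
    (h₂ : W₂.IsMonophonic) (h₃ : W₃.IsMonophonic) (h₄ : W₄.IsMonophonic) (hc : c₁ ≠ c₂)
    (hr : r₁ ≠ r₂) (h₁₃ : G.Adj c₁ c₂ → ∀ q ∈ W₁.support, q ∈ W₃.support → q = r₁)
    (h₁₄ : c₁ ∉ W₄.support) (h₁₄' : r₂ ∉ W₁.support)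
    (h₂₄ : H.Adj r₁ r₂ → ∀ p ∈ W₂.support, p ∈ W₄.support → p = c₂) :
    (((W₁.boxProdRight G c₁).append ((W₂.boxProdLeft H r₁).append
      (W₃.boxProdRight G c₂))).append (W₄.boxProdLeft H r₂)).IsMonophonic := by
  refine (isMonophonic_staircase₃ h₁ h₂ h₃ hc h₁₃).append (h₄.boxProdLeft r₂) ?_
  simp only [mem_support_append_iff, mem_support_boxProdLeft, mem_support_boxProdRight]
  rintro _ (⟨q, hq, rfl⟩ | ⟨p', hp', rfl⟩ | ⟨q, hq, rfl⟩) _ ⟨p, hp, rfl⟩ hz hp₂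
  all_goals simp only [ne_eq, Prod.mk.injEq, boxProd_adj, not_or, not_and] at *
  all_goals grind

theorem LieOnMonophonicPath.boxProdComm {a b c : β × α}
    (h : (H □ G).LieOnMonophonicPath a b c) :
    (G □ H).LieOnMonophonicPath a.swap b.swap c.swap :=
  h.map (H.boxProdComm G).toEmbedding

theorem lieOnMonophonicPath_boxProd_of_mem (hH : H.Connected) {u u' x : α} (hu : u ≠ u')
    (huu' : ¬G.Adj u u') {P : G.Walk u u'} (hP : P.IsMonophonic) (hxP : x ∈ P.support)
    (v v' y : β) : (G □ H).LieOnMonophonicPath (u, v) (u', v') (x, y) := by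
  obtain ⟨Q₁, hQ₁⟩ := hH.exists_isMonophonic v y
  obtain ⟨Q₂, hQ₂⟩ := hH.exists_isMonophonic y v'
  refine ⟨_, _, _, isMonophonic_staircase₃ hQ₁ hP hQ₂ hu (absurd · huu'), ?_, ?_, ?_⟩ <;>
    simp only [mem_support_append_iff, mem_support_boxProdLeft, mem_support_boxProdRight]
  exacts [.inl ⟨v, Q₁.start_mem_support, rfl⟩, .inr (.inr ⟨v', Q₂.end_mem_support, rfl⟩),
    .inr (.inl ⟨x, hxP, rfl⟩)]

theorem lieOnMonophonicPath_boxProd_of_adj (hH : H.Connected) {u u' x : α} (hu : u ≠ u')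
    (huu' : ¬G.Adj u u') (hxu : G.Adj x u) {P : G.Walk u u'} (hP : P.IsMonophonic)
    (hxP : x ∉ P.support) {v v' y : β} {Q : H.Walk v v'} (hQ : Q.IsMonophonic)
    (hyQ : y ∉ Q.support) : (G □ H).LieOnMonophonicPath (u, v) (u', v') (x, y) := by
  obtain ⟨Q₁, hQ₁⟩ := hH.exists_isMonophonic y v
  have hW := isMonophonic_staircase₄ (G := H) (H := G) hxu.isMonophonic_toWalk hQ₁ hP hQ
    (fun h => hyQ (h ▸ Q.start_mem_support)) hu
    (fun _ q hq hqP => by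
      rw [hxu.support_toWalk, List.mem_pair] at hq
      exact hq.resolve_left fun h => hxP (h ▸ hqP))
    hyQ
    (by rw [hxu.support_toWalk, List.mem_pair, not_or]
        exact ⟨fun h => hxP (h ▸ P.end_mem_support), hu.symm⟩)
    (absurd · huu')
  refine LieOnMonophonicPath.boxProdComm (a := (v, u)) (b := (v', u')) (c := (y, x))
    ⟨_, _, _, hW, ?_, ?_, ?_⟩ <;>
    simp only [mem_support_append_iff, mem_support_boxProdLeft, mem_support_boxProdRight]
  exacts [.inl (.inr (.inr ⟨u, P.start_mem_support, rfl⟩)), .inr ⟨v', Q.end_mem_support, rfl⟩,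
    .inl (.inl ⟨x, hxu.toWalk.start_mem_support, rfl⟩)]

theorem lieOnMonophonicPath_boxProd_of_not_adj (hG : G.Connected) {u u' x : α}
    (hxu : ¬G.Adj x u) {P : G.Walk u u'} (hP : P.IsMonophonic) (hxP : x ∉ P.support)
    {v v' y : β} (hv : v ≠ v') (hvv' : ¬H.Adj v v') {Q₁ : H.Walk y v} (hQ₁ : Q₁.IsMonophonic)
    (hv'Q₁ : v' ∉ Q₁.support) {Q : H.Walk v v'} (hQ : Q.IsMonophonic) :
    (G □ H).LieOnMonophonicPath (u, v) (u', v') (x, y) := by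
  obtain ⟨P₁, hP₁⟩ := hG.exists_isMonophonic x u
  have hW := isMonophonic_staircase₄ hQ₁ hP₁ hQ hP (fun h => hxP (h ▸ P.start_mem_support)) hv
    (absurd · hxu) hxP hv'Q₁ (absurd · hvv')
  refine ⟨_, _, _, hW, ?_, ?_, ?_⟩ <;>
    simp only [mem_support_append_iff, mem_support_boxProdLeft, mem_support_boxProdRight]
  exacts [.inl (.inr (.inr ⟨v, Q.start_mem_support, rfl⟩)), .inr ⟨u', P.end_mem_support, rfl⟩,
    .inl (.inl ⟨y, Q₁.start_mem_support, rfl⟩)]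

theorem lieOnMonophonicPath_boxProd (hG : G.Connected) (hH : H.Connected) {u u' : α} {v v' : β}
    (hu : u ≠ u') (huu' : ¬G.Adj u u') (hv : v ≠ v') (hvv' : ¬H.Adj v v') (x : α) (y : β) :
    (G □ H).LieOnMonophonicPath (u, v) (u', v') (x, y) := by
  by_cases hx : ∃ P : G.Walk u u', P.IsMonophonic ∧ x ∈ P.support
  · obtain ⟨P, hP, hxP⟩ := hx
    exact lieOnMonophonicPath_boxProd_of_mem hH hu huu' hP hxP v v' y
  by_cases hy : ∃ Q : H.Walk v v', Q.IsMonophonic ∧ y ∈ Q.support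
  · obtain ⟨Q, hQ, hyQ⟩ := hy
    exact (lieOnMonophonicPath_boxProd_of_mem hG hv hvv' hQ hyQ u u' x).boxProdComm
  push Not at hx hy
  obtain ⟨P, hP⟩ := hG.exists_isMonophonic u u'
  obtain ⟨Q, hQ⟩ := hH.exists_isMonophonic v v'
  have hxP' : x ∉ P.reverse.support := by simpa using hx P hP
  have hyQ' : y ∉ Q.reverse.support := by simpa using hy Q hQ
  by_cases hxu : G.Adj x u
  · exact lieOnMonophonicPath_boxProd_of_adj hH hu huu' hxu hP (hx P hP) hQ (hy Q hQ)
  by_cases hxu' : G.Adj x u'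
  · exact (lieOnMonophonicPath_boxProd_of_adj hH hu.symm (huu' ∘ .symm) hxu' hP.reverse hxP'
      hQ.reverse hyQ').comm
  rcases hH.exists_isMonophonic_avoiding y hv with ⟨Q₁, hQ₁, hv'Q₁⟩ | ⟨Q₁, hQ₁, hvQ₁⟩
  · exact lieOnMonophonicPath_boxProd_of_not_adj hG hxu hP (hx P hP) hv hvv' hQ₁ hv'Q₁ hQ
  · exact (lieOnMonophonicPath_boxProd_of_not_adj hG hxu' hP.reverse hxP' hv.symm
      (hvv' ∘ .symm) hQ₁ hvQ₁ hQ.reverse).comm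

end BoxProd

end SimpleGraph

theorem maximal_mpSet_of_not_mem_closedNeighborhoods_general {α β : Type*}
    (G : SimpleGraph α) (H : SimpleGraph β) (hG : G.Connected) (hH : H.Connected)
    (u u' : α) (v v' : β) (hune : u' ≠ u) (huadj : ¬ G.Adj u u')
    (hvne : v' ≠ v) (hvadj : ¬ H.Adj v v') :
    (G □ H).IsMPSet {(u, v), (u', v')} ∧
      ∀ T : Set (α × β), (G □ H).IsMPSet T → {(u, v), (u', v')} ⊆ T →
        T = {(u, v), (u', v')} := by
  refine ⟨isMPSet_pair _ _ _, fun T hT hsub => hT.eq_pair ?_ hsub ?_⟩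
  · exact fun h => hune (congrArg Prod.fst h).symm
  · rintro ⟨x, y⟩ - -
    exact lieOnMonophonicPath_boxProd hG hH hune.symm huadj hvne.symm hvadj x y

/-- If `u' ∉ N_G[u]` and `v' ∉ N_H[v]`, then `{(u,v),(u',v')}` is a
maximal monophonic position set of `G □ H`. -/
theorem maximal_mpSet_of_not_mem_closedNeighborhoods {α β : Type*} [Fintype α] [Fintype β]
    (G : SimpleGraph α) (H : SimpleGraph β) (hG : G.Connected) (hH : H.Connected)
    (u u' : α) (v v' : β) (hune : u' ≠ u) (huadj : ¬ G.Adj u u')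
    (hvne : v' ≠ v) (hvadj : ¬ H.Adj v v') :
    (G □ H).IsMPSet {(u, v), (u', v')} ∧
      ∀ T : Set (α × β), (G □ H).IsMPSet T → {(u, v), (u', v')} ⊆ T →
        T = {(u, v), (u', v')} :=
  maximal_mpSet_of_not_mem_closedNeighborhoods_general G H hG hH u u' v v' hune huadj hvne hvadj
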